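/- arXiv:2309.07678 — 8 statements merged into one kernel-verified Lean document; each statement's English description precedes it below -/
import Mathlib

section
/- For every r > 0 and every ε > 0 there exists R > 0 such that for each point (x,y,z) ∈ ℂ³ with x·y = P(z) and max{|x|,|y|} ≥ R, the Gaussian measure of the set {t ∈ ℂ : |η_t(x,y,z)| < r} is less than ε. -/
open MeasureTheory Polynomial

/-- The standard Gaussian probability measure on ℂ ≅ ℝ²:
    γ(U) = (1/(2π)) ∫_U e^{−|w|²/2} dλ(w). -/
noncomputable def gaussianMeasureC : Measure ℂ :=
  MeasureTheory.volume.withDensity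
    (fun w => ENNReal.ofReal ((2 * Real.pi)⁻¹ * Real.exp (-(‖w‖) ^ 2 / 2)))

/-- η_t(x,y,z) = (1/y)·P(z+yt) if y ≠ 0, and x + t·P′(z) if y = 0. -/
noncomputable def eta (P : Polynomial ℂ) (t x y z : ℂ) : ℂ :=
  if y ≠ 0 then y⁻¹ * P.eval (z + y * t) else x + t * (Polynomial.derivative P).eval z

/-!
For fixed `(x, y, z)`, `t ↦ η_t(x, y, z)` is a polynomial `Q` of degree at most `d = deg P` with
`Q(0) = x`, whose leading coefficient is `lc(P) y ^ (d - 1)` when `y ≠ 0`. Away from the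
`ρ`-neighbourhood of the roots of `Q`, which has Gaussian measure at most `d ρ² / 2`, one has
`|Q(t)| ≥ |lc Q| ρ ^ d`; if moreover `|t| ≤ B`, comparing each factor `|t - σ|` with `|σ|` gives
`|Q(t)| ≥ (ρ / 2B) ^ d |Q(0)|`. Hence `{|η_t| < r}` has small measure once `|x|` is large (up to
the Gaussian tail `|t| > B`) or `|y|` is large (then `|lc Q| ≥ |lc P| |y|` since `d ≥ 2`).
-/

open Metric Filter

lemma gaussianMeasureC_le_smul_volume :
    gaussianMeasureC ≤ ENNReal.ofReal (2 * Real.pi)⁻¹ • volume := by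
  rw [← withDensity_const]
  refine withDensity_mono (ae_of_all _ fun w => ENNReal.ofReal_le_ofReal ?_)
  have : Real.exp (-‖w‖ ^ 2 / 2) ≤ 1 := Real.exp_le_one_iff.2 (by nlinarith [sq_nonneg ‖w‖])
  exact mul_le_of_le_one_right (by positivity) this

lemma gaussianMeasureC_ball_le (c : ℂ) {ρ : ℝ} (hρ : 0 ≤ ρ) :
    gaussianMeasureC (ball c ρ) ≤ ENNReal.ofReal (ρ ^ 2 / 2) := by
  calc gaussianMeasureC (ball c ρ)
      ≤ ENNReal.ofReal (2 * Real.pi)⁻¹ * volume (ball c ρ) := gaussianMeasureC_le_smul_volume _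
    _ = ENNReal.ofReal (ρ ^ 2 / 2) := by
      rw [Complex.volume_ball, ← ENNReal.ofReal_pow hρ, ← ENNReal.ofReal_coe_nnreal,
        NNReal.coe_real_pi, ← ENNReal.ofReal_mul (by positivity),
        ← ENNReal.ofReal_mul (by positivity)]
      congr 1
      field_simp

instance : IsFiniteMeasure gaussianMeasureC := by
  refine isFiniteMeasure_withDensity_ofReal (Integrable.hasFiniteIntegral ?_)
  have h := (GaussianFourier.integrable_cexp_neg_mul_sq_norm_add (V := ℂ)
    (b := (1 / 2 : ℂ)) (by norm_num) 0 0).norm.const_mul (2 * Real.pi)⁻¹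
  convert h using 1
  · rfl
  ext w
  rw [Complex.norm_exp]
  norm_num [← Complex.ofReal_pow]
  ring

lemma exists_gaussianMeasureC_norm_gt_lt {δ : ℝ} (hδ : 0 < δ) :
    ∃ B : ℝ, 1 ≤ B ∧ gaussianMeasureC {t | B < ‖t‖} < ENNReal.ofReal δ := by
  have h := tendsto_measure_norm_gt_of_isTightMeasureSet
    (isTightMeasureSet_singleton (μ := gaussianMeasureC))
  simp only [Set.mem_singleton_iff, iSup_iSup_eq_left] at h
  obtain ⟨B, hB, hB₁⟩ :=
    ((h.eventually (gt_mem_nhds (ENNReal.ofReal_pos.2 hδ))).and (eventually_ge_atTop 1)).exists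
  exact ⟨B, hB₁, hB⟩

lemma gaussianMeasureC_biUnion_ball_le (s : Finset ℂ) {ρ : ℝ} (hρ : 0 ≤ ρ) :
    gaussianMeasureC (⋃ w ∈ s, ball w ρ) ≤ ENNReal.ofReal (s.card * (ρ ^ 2 / 2)) := by
  calc gaussianMeasureC (⋃ w ∈ s, ball w ρ)
      ≤ ∑ w ∈ s, gaussianMeasureC (ball w ρ) := measure_biUnion_finset_le _ _
    _ ≤ ∑ _w ∈ s, ENNReal.ofReal (ρ ^ 2 / 2) :=
        Finset.sum_le_sum fun w _ => gaussianMeasureC_ball_le w hρ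
    _ = ENNReal.ofReal (s.card * (ρ ^ 2 / 2)) := by
        rw [Finset.sum_const, nsmul_eq_mul, ENNReal.ofReal_mul (by positivity),
          ENNReal.ofReal_natCast]

lemma exists_gaussianMeasureC_biUnion_ball_roots_lt (n : ℕ) {ε : ℝ} (hε : 0 < ε) :
    ∃ ρ : ℝ, 0 < ρ ∧ ρ ≤ 1 ∧ ∀ Q : ℂ[X], Q.natDegree ≤ n →
      gaussianMeasureC (⋃ σ ∈ Q.roots.toFinset, ball σ ρ) < ENNReal.ofReal ε := by
  refine ⟨min 1 (ε / (n + 1)), by positivity, min_le_left _ _, fun Q hQ => ?_⟩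
  set ρ := min 1 (ε / (n + 1))
  have hcard : (Q.roots.toFinset.card : ℝ) ≤ n := by
    exact_mod_cast (Multiset.toFinset_card_le _).trans ((card_roots' Q).trans hQ)
  have hρ : ρ * (n + 1) ≤ ε := (le_div_iff₀ (by positivity)).1 (min_le_right _ _)
  have hρ₁ : ρ ≤ 1 := min_le_left _ _
  have hρ₀ : 0 < ρ := by positivity
  refine (gaussianMeasureC_biUnion_ball_le _ hρ₀.le).trans_lt
    ((ENNReal.ofReal_lt_ofReal_iff hε).2 ?_)
  nlinarith [mul_le_mul_of_nonneg_right hcard (sq_nonneg ρ)]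

section RootProduct

variable {K : Type*} [NormedField K] [IsAlgClosed K]

lemma norm_eval_eq_norm_leadingCoeff_mul_prod (Q : K[X]) (t : K) :
    ‖Q.eval t‖ = ‖Q.leadingCoeff‖ * (Q.roots.map fun σ => ‖t - σ‖).prod := by
  rw [(IsAlgClosed.splits Q).eval_eq_prod_roots, norm_mul]
  congr 1
  exact (map_multiset_prod (normHom : K →*₀ ℝ) _).trans (by rw [Multiset.map_map]; rfl)

lemma pow_mul_le_norm_eval_of_forall_roots (Q : K[X]) {n : ℕ} (hQ : Q.natDegree ≤ n)
    {c : ℝ} (hc₀ : 0 ≤ c) (hc₁ : c ≤ 1) {t : K} {f : K → ℝ} (hf : ∀ σ ∈ Q.roots, 0 ≤ f σ)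
    (h : ∀ σ ∈ Q.roots, c * f σ ≤ ‖t - σ‖) :
    c ^ n * (‖Q.leadingCoeff‖ * (Q.roots.map f).prod) ≤ ‖Q.eval t‖ := by
  have hprod : c ^ Multiset.card Q.roots * (Q.roots.map f).prod
      ≤ (Q.roots.map fun σ => ‖t - σ‖).prod := by
    rw [← Multiset.prod_replicate, ← Multiset.map_const', ← Multiset.prod_map_mul]
    exact Multiset.prod_map_le_prod_map₀ _ _ (fun σ hσ => mul_nonneg hc₀ (hf σ hσ)) h
  have hpow : c ^ n ≤ c ^ Multiset.card Q.roots :=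
    pow_le_pow_of_le_one hc₀ hc₁ ((card_roots' Q).trans hQ)
  rw [norm_eval_eq_norm_leadingCoeff_mul_prod, mul_left_comm]
  refine mul_le_mul_of_nonneg_left (le_trans ?_ hprod) (norm_nonneg _)
  exact mul_le_mul_of_nonneg_right hpow (Multiset.prod_map_nonneg hf)

end RootProduct

lemma mul_norm_le_norm_sub {E : Type*} [SeminormedAddCommGroup E] {ρ B : ℝ} (hρ : 0 < ρ)
    (hρB : ρ ≤ B) {t σ : E} (ht : ‖t‖ ≤ B) (hσ : ρ ≤ ‖t - σ‖) : ρ / (2 * B) * ‖σ‖ ≤ ‖t - σ‖ := by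
  have hB : 0 < B := hρ.trans_le hρB
  rw [div_mul_eq_mul_div, div_le_iff₀ (by positivity)]
  rcases le_or_gt (2 * B) ‖σ‖ with hσB | hσB
  · have : ‖σ‖ - ‖t‖ ≤ ‖t - σ‖ := by rw [norm_sub_rev]; exact norm_sub_norm_le σ t
    nlinarith [norm_nonneg σ]
  · nlinarith [norm_nonneg σ]

lemma forall_roots_le_norm_sub_of_notMem {Q : ℂ[X]} {ρ : ℝ} {t : ℂ}
    (ht : t ∉ ⋃ σ ∈ Q.roots.toFinset, ball σ ρ) : ∀ σ ∈ Q.roots, ρ ≤ ‖t - σ‖ := by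
  simpa [dist_eq_norm] using ht

lemma exists_gaussianMeasureC_norm_eval_lt_of_leadingCoeff (n : ℕ) (r : ℝ) {ε : ℝ}
    (hε : 0 < ε) : ∃ A : ℝ, ∀ Q : ℂ[X], Q.natDegree ≤ n → A ≤ ‖Q.leadingCoeff‖ →
      gaussianMeasureC {t | ‖Q.eval t‖ < r} < ENNReal.ofReal ε := by
  obtain ⟨ρ, hρ₀, hρ₁, hballs⟩ := exists_gaussianMeasureC_biUnion_ball_roots_lt n hε
  refine ⟨r / ρ ^ n, fun Q hQ hA => (measure_mono fun t ht => ?_).trans_lt (hballs Q hQ)⟩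
  by_contra hnot
  have key := pow_mul_le_norm_eval_of_forall_roots Q hQ hρ₀.le hρ₁ (f := fun _ => 1)
    (fun _ _ => zero_le_one) (by simpa using forall_roots_le_norm_sub_of_notMem hnot)
  rw [Multiset.map_const', Multiset.prod_replicate, one_pow, mul_one] at key
  rw [div_le_iff₀ (by positivity)] at hA
  exact not_lt.2 (hA.trans_eq (mul_comm _ _) |>.trans key) ht

lemma exists_gaussianMeasureC_norm_eval_lt_of_eval_zero (n : ℕ) (r : ℝ) {ε : ℝ}
    (hε : 0 < ε) : ∃ R : ℝ, ∀ Q : ℂ[X], Q.natDegree ≤ n → R ≤ ‖Q.eval 0‖ →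
      gaussianMeasureC {t | ‖Q.eval t‖ < r} < ENNReal.ofReal ε := by
  obtain ⟨B, hB₁, htail⟩ := exists_gaussianMeasureC_norm_gt_lt (half_pos hε)
  obtain ⟨ρ, hρ₀, hρ₁, hballs⟩ := exists_gaussianMeasureC_biUnion_ball_roots_lt n (half_pos hε)
  have hB₀ : 0 < B := zero_lt_one.trans_le hB₁
  set c := ρ / (2 * B)
  have hc₀ : 0 < c := by positivity
  have hc₁ : c ≤ 1 := (div_le_one (by positivity)).2 (by linarith)
  refine ⟨r / c ^ n, fun Q hQ hR => ?_⟩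
  have hcover : {t | ‖Q.eval t‖ < r} ⊆ {t | B < ‖t‖} ∪ ⋃ σ ∈ Q.roots.toFinset, ball σ ρ := by
    intro t ht
    by_contra hnot
    simp only [Set.mem_union, Set.mem_ofPred_eq, not_or, not_lt] at hnot
    have key := pow_mul_le_norm_eval_of_forall_roots Q hQ hc₀.le hc₁ (t := t)
      (f := fun σ => ‖0 - σ‖) (fun _ _ => norm_nonneg _) fun σ hσ => by
        simpa using mul_norm_le_norm_sub hρ₀ (hρ₁.trans hB₁) hnot.1
          (forall_roots_le_norm_sub_of_notMem hnot.2 σ hσ)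
    rw [← norm_eval_eq_norm_leadingCoeff_mul_prod] at key
    rw [div_le_iff₀ (by positivity)] at hR
    exact not_lt.2 (hR.trans_eq (mul_comm _ _) |>.trans key) ht
  calc gaussianMeasureC {t | ‖Q.eval t‖ < r}
      ≤ gaussianMeasureC {t | B < ‖t‖} + gaussianMeasureC (⋃ σ ∈ Q.roots.toFinset, ball σ ρ) :=
        (measure_mono hcover).trans (measure_union_le _ _)
    _ < ENNReal.ofReal (ε / 2) + ENNReal.ofReal (ε / 2) :=
        ENNReal.add_lt_add htail (hballs Q hQ)
    _ = ENNReal.ofReal ε := by rw [← ENNReal.ofReal_add (by positivity) (by positivity), add_halves]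

noncomputable def etaPoly (P : ℂ[X]) (x y z : ℂ) : ℂ[X] :=
  if y ≠ 0 then C y⁻¹ * P.comp (C y * X + C z) else C ((derivative P).eval z) * X + C x

lemma eta_eq_eval_etaPoly (P : ℂ[X]) (t x y z : ℂ) :
    _root_.eta P t x y z = (etaPoly P x y z).eval t := by
  unfold _root_.eta etaPoly
  split_ifs
  · simp only [eval_mul, eval_C, eval_comp, eval_add, eval_X, add_comm (y * t)]
  · simp only [eval_mul, eval_C, eval_add, eval_X]
    ring

lemma etaPoly_eval_zero (P : ℂ[X]) {x y z : ℂ} (hxy : x * y = P.eval z) :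
    (etaPoly P x y z).eval 0 = x := by
  unfold etaPoly
  split_ifs with hy
  · simp only [eval_mul, eval_C, eval_comp, eval_add, eval_X, mul_zero, zero_add, ← hxy]
    field_simp
  · simp

lemma natDegree_etaPoly_le (P : ℂ[X]) (hP : 1 ≤ P.natDegree) (x y z : ℂ) :
    (etaPoly P x y z).natDegree ≤ P.natDegree := by
  unfold etaPoly
  split_ifs with hy
  · refine (natDegree_C_mul_le _ _).trans ?_
    rw [natDegree_comp, natDegree_linear hy, mul_one]
  · exact natDegree_linear_le.trans hP

lemma norm_leadingCoeff_etaPoly (P : ℂ[X]) (hP : 1 ≤ P.natDegree) (x : ℂ) {y : ℂ} (hy : y ≠ 0)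
    (z : ℂ) : ‖(etaPoly P x y z).leadingCoeff‖ = ‖P.leadingCoeff‖ * ‖y‖ ^ (P.natDegree - 1) := by
  rw [etaPoly, if_pos hy, leadingCoeff_mul, leadingCoeff_C,
    leadingCoeff_comp (by rw [natDegree_linear hy]; exact one_ne_zero), leadingCoeff_linear hy,
    norm_mul, norm_mul, norm_inv, norm_pow, ← pow_sub_one_mul (by omega : P.natDegree ≠ 0)]
  field_simp

theorem stmt0_general (P : Polynomial ℂ) (hdeg : 2 ≤ P.natDegree) :
    ∀ r : ℝ, 0 < r → ∀ ε : ℝ, 0 < ε → ∃ R : ℝ, 0 < R ∧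
      ∀ x y z : ℂ, x * y = P.eval z → R ≤ max (‖x‖) (‖y‖) →
        gaussianMeasureC {t : ℂ | ‖eta P t x y z‖ < r} < ENNReal.ofReal ε := by
  intro r _ ε hε
  obtain ⟨R₀, hR₀⟩ := exists_gaussianMeasureC_norm_eval_lt_of_eval_zero P.natDegree r hε
  obtain ⟨A, hA⟩ := exists_gaussianMeasureC_norm_eval_lt_of_leadingCoeff P.natDegree r hε
  have hlc : 0 < ‖P.leadingCoeff‖ :=
    norm_pos_iff.2 (leadingCoeff_ne_zero.2 (ne_zero_of_natDegree_gt hdeg))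
  refine ⟨max R₀ (max 1 (A / ‖P.leadingCoeff‖)), lt_max_of_lt_right (lt_max_of_lt_left one_pos),
    fun x y z hxy hmax => ?_⟩
  have hQ := natDegree_etaPoly_le P (by omega) x y z
  simp only [eta_eq_eval_etaPoly]
  by_cases hx : R₀ ≤ ‖x‖
  · exact hR₀ _ hQ (by rwa [etaPoly_eval_zero P hxy])
  obtain ⟨hy₁, hyA⟩ : 1 ≤ ‖y‖ ∧ A / ‖P.leadingCoeff‖ ≤ ‖y‖ := by
    rcases le_max_iff.1 hmax with h | h
    · exact absurd ((le_max_left _ _).trans h) hx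
    · exact max_le_iff.1 ((le_max_right _ _).trans h)
  refine hA _ hQ ?_
  rw [norm_leadingCoeff_etaPoly P (by omega) x (norm_pos_iff.1 (one_pos.trans_le hy₁)) z]
  calc A ≤ ‖P.leadingCoeff‖ * ‖y‖ := (div_le_iff₀' hlc).1 hyA
    _ ≤ ‖P.leadingCoeff‖ * ‖y‖ ^ (P.natDegree - 1) :=
      mul_le_mul_of_nonneg_left (le_self_pow₀ hy₁ (by omega)) hlc.le

theorem stmt0 (P : Polynomial ℂ) (hdeg : 2 ≤ P.natDegree)
    (hsq : ∀ z : ℂ, ¬(P.eval z = 0 ∧ (Polynomial.derivative P).eval z = 0)) :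
    ∀ r : ℝ, 0 < r → ∀ ε : ℝ, 0 < ε → ∃ R : ℝ, 0 < R ∧
      ∀ x y z : ℂ, x * y = P.eval z → R ≤ max (‖x‖) (‖y‖) →
        gaussianMeasureC {t : ℂ | ‖eta P t x y z‖ < r} < ENNReal.ofReal ε :=
  stmt0_general P hdeg
end

section
/- For every point (x,y,z) ∈ ℂ³ with x·y = P(z), the function ℂ → ℂ given by t ↦ η_t(x,y,z) is non-constant. -/
open Polynomial

theorem stmt1 (P : Polynomial ℂ) (hdeg : 2 ≤ P.natDegree)
    (hsq : ∀ z : ℂ, ¬(P.eval z = 0 ∧ (Polynomial.derivative P).eval z = 0))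
    (x y z : ℂ) (hX : x * y = P.eval z) :
    ∃ t₁ t₂ : ℂ, eta P t₁ x y z ≠ eta P t₂ x y z := by
  by_cases hy : y = 0
  · -- y = 0: P(z) = 0, so P'(z) ≠ 0
    have hPz : P.eval z = 0 := by rw [← hX, hy, mul_zero]
    have hP' : (Polynomial.derivative P).eval z ≠ 0 := fun h => hsq z ⟨hPz, h⟩
    refine ⟨0, 1, ?_⟩
    unfold _root_.eta
    simp only [hy, ne_eq, not_true_eq_false, if_false, zero_mul, one_mul, add_zero]
    intro h
    exact hP' (by linear_combination -h)
  · -- y ≠ 0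
    -- P is non-constant, so there is w with P(w) ≠ P(z)
    have hQ : P - C (P.eval z) ≠ 0 := by
      intro h
      have : P = C (P.eval z) := by linear_combination (norm := ring_nf) h
      rw [this, natDegree_C] at hdeg
      omega
    obtain ⟨w, hw⟩ : ∃ w, (P - C (P.eval z)).eval w ≠ 0 := by
      have hfin := Polynomial.finite_setOf_isRoot hQ
      obtain ⟨w, hw⟩ := hfin.infinite_compl.nonempty
      exact ⟨w, hw⟩
    have hw' : P.eval w ≠ P.eval z := by
      intro h; apply hw; simp [h]
    refine ⟨(w - z) / y, 0, ?_⟩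
    unfold _root_.eta
    simp only [hy, ne_eq, not_false_eq_true, if_true, mul_zero, add_zero]
    rw [mul_div_cancel₀ _ hy, add_sub_cancel]
    intro h
    exact hw' (mul_left_cancel₀ (inv_ne_zero hy) h)
end

section
/- Let P be a polynomial of degree d ≥ 1 and let ρ, α > 0 be constants such that α·|z|^d ≤ |P(z)| for all z ∈ ℂ with |z| ≥ ρ. Then for every r > 0, every z ∈ ℂ and every y ∈ ℂ with y ≠ 0, the Gaussian measure of the set {t ∈ ℂ : |(1/y)·P(z+yt)| < r} is at most π·ρ²/|y|² + π·(r/α)^{2/d}·|y|^{(2/d) − 2}. -/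
/-!
Since the Gaussian density is at most `1`, the Gaussian measure is dominated by Lebesgue measure.
The growth bound `α‖w‖ᵈ ≤ ‖P w‖` for `‖w‖ ≥ ρ` confines the sublevel set `{‖P w‖ < r‖y‖}` to the
union of the discs of radii `ρ` and `(r‖y‖/α)^{1/d}` about `0`, and the affine change of variables
`w = z + y t` turns these into discs of radii `ρ/‖y‖` and `(r‖y‖/α)^{1/d}/‖y‖`, of area `π · radius²`.
-/

open MeasureTheory Polynomial

open Metric

theorem gaussianMeasureC_le_volume : gaussianMeasureC ≤ volume := by
  conv_rhs => rw [← withDensity_one (μ := (volume : Measure ℂ))]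
  refine withDensity_mono (ae_of_all _ fun w => ENNReal.ofReal_le_one.mpr ?_)
  have h2π : 1 ≤ 2 * Real.pi := by linarith [Real.pi_gt_three]
  refine mul_le_one₀ (inv_le_one_of_one_le₀ h2π) (Real.exp_nonneg _) ?_
  exact Real.exp_le_one_iff.mpr (by nlinarith [sq_nonneg ‖w‖])

theorem Complex.volume_ball_le (a : ℂ) (s : ℝ) :
    volume (ball a s) ≤ ENNReal.ofReal (Real.pi * s ^ 2) := by
  rcases le_or_gt s 0 with hs | hs
  · simp [ball_eq_empty.mpr hs]
  · rw [Complex.volume_ball, ← ENNReal.ofReal_pow hs.le, ← ENNReal.ofReal_coe_nnreal,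
      NNReal.coe_real_pi, ← ENNReal.ofReal_mul (by positivity), mul_comm]

theorem preimage_add_mul_ball_zero {𝕜 : Type*} [NormedField 𝕜] (z : 𝕜) {y : 𝕜} (hy : y ≠ 0)
    (R : ℝ) : (fun t => z + y * t) ⁻¹' ball 0 R = ball (-(z / y)) (R / ‖y‖) := by
  ext t
  have hz : z + y * t = y * (t - -(z / y)) := by field_simp; ring
  rw [Set.mem_preimage, mem_ball_zero_iff, mem_ball, dist_eq_norm, hz, norm_mul,
    lt_div_iff₀ (norm_pos_iff.mpr hy), mul_comm]

theorem setOf_norm_lt_subset_ball_union_ball {E F : Type*} [SeminormedAddCommGroup E]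
    [SeminormedAddCommGroup F] {f : E → F} {ρ α : ℝ} {d : ℕ} (hα : 0 < α) (hd : d ≠ 0)
    (hbound : ∀ w, ρ ≤ ‖w‖ → α * ‖w‖ ^ d ≤ ‖f w‖) (s : ℝ) :
    {w | ‖f w‖ < s} ⊆ ball 0 ρ ∪ ball 0 ((s / α) ^ (d : ℝ)⁻¹) := by
  intro w hw
  simp only [Set.mem_ofPred_eq] at hw
  simp only [Set.mem_union, mem_ball_zero_iff]
  refine (lt_or_ge ‖w‖ ρ).imp id fun hρw => ?_
  have hpow : ‖w‖ ^ d < s / α := by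
    rw [lt_div_iff₀ hα, mul_comm]
    exact (hbound w hρw).trans_lt hw
  rw [Real.lt_rpow_inv_iff_of_pos (norm_nonneg w) ((by positivity : 0 ≤ ‖w‖ ^ d).trans hpow.le)
    (by exact_mod_cast Nat.pos_of_ne_zero hd), Real.rpow_natCast]
  exact hpow

theorem sq_rpow_inv_div {c A : ℝ} (hc : 0 ≤ c) (hA : 0 < A) (d : ℕ) :
    ((c * A) ^ (d : ℝ)⁻¹ / A) ^ 2 = c ^ ((2 : ℝ) / d) * A ^ ((2 : ℝ) / d - 2) := by
  have hsq : ∀ x : ℝ, 0 ≤ x → (x ^ (d : ℝ)⁻¹) ^ 2 = x ^ ((2 : ℝ) / d) := fun x hx => by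
    rw [← Real.rpow_mul_natCast hx, div_eq_mul_inv, mul_comm, Nat.cast_ofNat]
  rw [div_pow, Real.mul_rpow hc hA.le, mul_pow, hsq c hc, hsq A hA.le, Real.rpow_sub hA,
    Real.rpow_two, mul_div_assoc]

theorem stmt3_general (P : Polynomial ℂ) (d : ℕ) (hd : 1 ≤ d)
    (ρ α : ℝ) (hα : 0 < α)
    (hbound : ∀ z : ℂ, ρ ≤ ‖z‖ → α * (‖z‖) ^ d ≤ ‖P.eval z‖)
    (r : ℝ) (hr : 0 < r) (z y : ℂ) (hy : y ≠ 0) :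
    gaussianMeasureC {t : ℂ | ‖y⁻¹ * P.eval (z + y * t)‖ < r} ≤
      ENNReal.ofReal (Real.pi * ρ ^ 2 / (‖y‖) ^ 2 +
        Real.pi * (r / α) ^ ((2 : ℝ) / d) * (‖y‖) ^ ((2 : ℝ) / d - 2)) := by
  have hA : 0 < ‖y‖ := norm_pos_iff.mpr hy
  have hd0 : d ≠ 0 := Nat.one_le_iff_ne_zero.mp hd
  have hset : {t : ℂ | ‖y⁻¹ * P.eval (z + y * t)‖ < r} =
      (fun t => z + y * t) ⁻¹' {w | ‖P.eval w‖ < r * ‖y‖} := by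
    ext t
    simp only [Set.mem_ofPred_eq, Set.mem_preimage, norm_mul, norm_inv, inv_mul_lt_iff₀ hA,
      mul_comm r]
  have hsub := Set.preimage_mono (f := fun t => z + y * t)
    (setOf_norm_lt_subset_ball_union_ball hα hd0 hbound (r * ‖y‖))
  rw [Set.preimage_union, preimage_add_mul_ball_zero z hy, preimage_add_mul_ball_zero z hy] at hsub
  calc gaussianMeasureC {t : ℂ | ‖y⁻¹ * P.eval (z + y * t)‖ < r}
      ≤ volume (ball (-(z / y)) (ρ / ‖y‖) ∪ ball (-(z / y)) ((r * ‖y‖ / α) ^ (d : ℝ)⁻¹ / ‖y‖)) :=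
        (gaussianMeasureC_le_volume _).trans (measure_mono (hset ▸ hsub))
    _ ≤ ENNReal.ofReal (Real.pi * (ρ / ‖y‖) ^ 2) +
        ENNReal.ofReal (Real.pi * ((r * ‖y‖ / α) ^ (d : ℝ)⁻¹ / ‖y‖) ^ 2) :=
        (measure_union_le _ _).trans (add_le_add (Complex.volume_ball_le _ _)
          (Complex.volume_ball_le _ _))
    _ = _ := by
        rw [← ENNReal.ofReal_add (by positivity) (by positivity), mul_div_right_comm,
          sq_rpow_inv_div (by positivity) hA d, div_pow, mul_div_assoc, mul_assoc]

theorem stmt3 (P : Polynomial ℂ) (d : ℕ) (hd : 1 ≤ d) (hdeg : P.natDegree = d)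
    (ρ α : ℝ) (hρ : 0 < ρ) (hα : 0 < α)
    (hbound : ∀ z : ℂ, ρ ≤ ‖z‖ → α * (‖z‖) ^ d ≤ ‖P.eval z‖)
    (r : ℝ) (hr : 0 < r) (z y : ℂ) (hy : y ≠ 0) :
    gaussianMeasureC {t : ℂ | ‖y⁻¹ * P.eval (z + y * t)‖ < r} ≤
      ENNReal.ofReal (Real.pi * ρ ^ 2 / (‖y‖) ^ 2 +
        Real.pi * (r / α) ^ ((2 : ℝ) / d) * (‖y‖) ^ ((2 : ℝ) / d - 2)) :=
  stmt3_general P d hd ρ α hα hbound r hr z y hy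
end

section
/- For every r > 0 and every C > 0 there exists R₀ > 0 such that: for every R ≥ R₀, every t ∈ ℂ, and every (x,y,z) ∈ ℂ³ satisfying x·y = P(z), |x| = R, |y| ≤ R^{1/d²} and |η_t(x,y,z)| ≤ r, one has |t| > C. (Equivalently, the quantities c_R = inf{|t| : ∃(x,y,z) ∈ X with |η_t(x,y,z)| ≤ r, |x| = R, |y| ≤ R^{1/d²}} tend to +∞ as R → ∞.) -/
/-!
On `X` we have `‖P z‖ = ‖x‖ ‖y‖`, and `‖η_t‖ ≤ r` gives `‖P (z + y t)‖ ≤ r ‖y‖` (for `y = 0` both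
points are the same root of `P`). Since `‖u‖ ^ d ≲ max 1 ‖P u‖`, both points lie in a ball on which
`‖P'‖ ^ d ≲ max 1 (‖x‖ ‖y‖) ^ (d - 1)`. The mean value theorem (for `y = 0`, the formula
`η_t = x + t P'(z)`) turns `‖η_t‖ ≤ r` into `‖x‖ - r ≤ ‖t‖ · sup ‖P'‖`. With `‖x‖ = R` and
`‖y‖ ≤ R ^ (1/d²)` this reads `(R - r) ^ d ≲ ‖t‖ ^ d R ^ ((1 + 1/d²)(d - 1))`, and the exponent is
less than `d`, so `‖t‖` must grow with `R`.
-/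

open Polynomial

open Filter Metric

namespace Polynomial

variable {𝕜 : Type*} [NormedField 𝕜]

theorem norm_eval_le_sum_norm_coeff_mul_max_one_pow (Q : 𝕜[X]) {n : ℕ} (hn : Q.natDegree ≤ n)
    (u : 𝕜) : ‖Q.eval u‖ ≤ (∑ i ∈ Finset.range (n + 1), ‖Q.coeff i‖) * max 1 ‖u‖ ^ n := by
  rw [eval_eq_sum_range' (Nat.lt_succ_of_le hn), Finset.sum_mul]
  refine (norm_sum_le _ _).trans (Finset.sum_le_sum fun i hi => ?_)
  rw [norm_mul, norm_pow]
  gcongr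
  calc ‖u‖ ^ i ≤ max 1 ‖u‖ ^ i := by gcongr; exact le_max_right _ _
    _ ≤ max 1 ‖u‖ ^ n :=
      pow_le_pow_right₀ (le_max_left _ _) (Nat.lt_succ_iff.mp (Finset.mem_range.mp hi))

theorem exists_norm_pow_natDegree_le (P : 𝕜[X]) (hP : 0 < P.natDegree) :
    ∃ c, 1 ≤ c ∧ ∀ u, ‖u‖ ^ P.natDegree ≤ c * max 1 ‖P.eval u‖ := by
  set d := P.natDegree
  set a := ‖P.leadingCoeff‖
  set A := ∑ i ∈ Finset.range (d - 1 + 1), ‖P.eraseLead.coeff i‖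
  have ha : 0 < a := norm_pos_iff.2 (leadingCoeff_ne_zero.2 (ne_zero_of_natDegree_gt hP))
  set ρ := max 1 (2 * A / a)
  have hρ : 1 ≤ ρ ^ d := one_le_pow₀ (le_max_left _ _)
  have h2a : 0 < 2 / a := by positivity
  refine ⟨ρ ^ d + 2 / a, by linarith, fun u => ?_⟩
  rcases le_or_gt ‖u‖ ρ with hu | hu
  · calc ‖u‖ ^ d ≤ ρ ^ d := by gcongr
      _ ≤ (ρ ^ d + 2 / a) * max 1 ‖P.eval u‖ := by
        nlinarith [le_max_left 1 ‖P.eval u‖]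
  have hu1 : 1 < ‖u‖ := (le_max_left _ _).trans_lt hu
  have hAu : 2 * A < a * ‖u‖ := by
    have := (le_max_right _ _).trans_lt hu
    rw [div_lt_iff₀ ha] at this
    linarith
  -- the leading term dominates the others once `‖u‖ > 2A/a`
  have hlead : a * ‖u‖ ^ d ≤ ‖P.eval u‖ + A * ‖u‖ ^ (d - 1) := by
    have hsplit := congrArg (eval u) P.eraseLead_add_C_mul_X_pow
    rw [eval_add, eval_mul, eval_C, eval_pow, eval_X] at hsplit
    have hrest := P.eraseLead.norm_eval_le_sum_norm_coeff_mul_max_one_pow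
      P.eraseLead_natDegree_le u
    rw [max_eq_right hu1.le] at hrest
    calc a * ‖u‖ ^ d = ‖P.leadingCoeff * u ^ d‖ := by rw [norm_mul, norm_pow]
      _ = ‖P.eval u - P.eraseLead.eval u‖ := by rw [← hsplit, add_sub_cancel_left]
      _ ≤ ‖P.eval u‖ + A * ‖u‖ ^ (d - 1) := (norm_sub_le _ _).trans (by gcongr)
  have hpow : ‖u‖ ^ d = ‖u‖ * ‖u‖ ^ (d - 1) := by rw [← pow_succ', Nat.sub_add_cancel hP]
  have hsmall : ‖u‖ ^ d ≤ 2 / a * ‖P.eval u‖ := by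
    rw [div_mul_eq_mul_div, le_div_iff₀ ha]
    nlinarith [pow_pos (zero_lt_one.trans hu1) (d - 1)]
  calc ‖u‖ ^ d ≤ 2 / a * ‖P.eval u‖ := hsmall
    _ ≤ (ρ ^ d + 2 / a) * max 1 ‖P.eval u‖ := by
      gcongr
      · linarith
      · exact le_max_right _ _

theorem exists_norm_derivative_le_of_norm_eval_le (P : 𝕜[X]) (hP : 0 < P.natDegree) :
    ∃ K, 0 ≤ K ∧ ∀ V, 1 ≤ V → ∃ ρ L, L ^ P.natDegree ≤ K * V ^ (P.natDegree - 1) ∧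
      (∀ u, ‖P.eval u‖ ≤ V → ‖u‖ ≤ ρ) ∧ ∀ u, ‖u‖ ≤ ρ → ‖P.derivative.eval u‖ ≤ L := by
  set d := P.natDegree
  obtain ⟨c, hc, hgrowth⟩ := P.exists_norm_pow_natDegree_le hP
  set A := ∑ i ∈ Finset.range (d - 1 + 1), ‖P.derivative.coeff i‖
  have hA : 0 ≤ A := Finset.sum_nonneg fun _ _ => norm_nonneg _
  refine ⟨A ^ d * c ^ (d - 1), by positivity, fun V hV => ?_⟩
  have hcV : 1 ≤ c * V := one_le_mul_of_one_le_of_one_le hc hV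
  set ρ := (c * V) ^ ((d : ℝ)⁻¹)
  have hρd : ρ ^ d = c * V := Real.rpow_inv_natCast_pow (by positivity) hP.ne'
  have hρ : 1 ≤ ρ := Real.one_le_rpow hcV (by positivity)
  refine ⟨ρ, A * ρ ^ (d - 1), ?_, fun u hu => ?_, fun u hu => ?_⟩
  · refine le_of_eq ?_
    calc (A * ρ ^ (d - 1)) ^ d = A ^ d * (ρ ^ d) ^ (d - 1) := by ring
      _ = A ^ d * c ^ (d - 1) * V ^ (d - 1) := by rw [hρd]; ring
  · rw [← pow_le_pow_iff_left₀ (norm_nonneg u) (by positivity) hP.ne', hρd]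
    calc ‖u‖ ^ d ≤ c * max 1 ‖P.eval u‖ := hgrowth u
      _ ≤ c * V := by gcongr; exact max_le hV hu
  · calc ‖P.derivative.eval u‖ ≤ A * max 1 ‖u‖ ^ (d - 1) :=
          P.derivative.norm_eval_le_sum_norm_coeff_mul_max_one_pow (natDegree_derivative_le P) u
      _ ≤ A * ρ ^ (d - 1) := by gcongr; exact max_le hρ hu

end Polynomial

section Danielewski

variable {P : ℂ[X]} {t x y z : ℂ} {r : ℝ}

theorem norm_eval_add_mul_le_of_norm_eta_le (hxy : x * y = P.eval z)
    (heta : ‖eta P t x y z‖ ≤ r) : ‖P.eval (z + y * t)‖ ≤ r * ‖y‖ := by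
  by_cases hy : y = 0
  · simp [hy, ← hxy]
  rw [_root_.eta, if_pos hy, norm_mul, norm_inv] at heta
  rwa [inv_mul_le_iff₀ (norm_pos_iff.2 hy), mul_comm ‖y‖] at heta

theorem norm_sub_le_norm_mul_of_norm_eta_le {ρ L : ℝ} (hxy : x * y = P.eval z)
    (heta : ‖eta P t x y z‖ ≤ r) (hP' : ∀ u, ‖u‖ ≤ ρ → ‖P.derivative.eval u‖ ≤ L)
    (hz : ‖z‖ ≤ ρ) (hw : ‖z + y * t‖ ≤ ρ) : ‖x‖ - r ≤ ‖t‖ * L := by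
  by_cases hy : y = 0
  · rw [_root_.eta, if_neg (not_not.2 hy)] at heta
    have hP'z := hP' z hz
    calc ‖x‖ - r ≤ ‖x‖ - ‖x + t * P.derivative.eval z‖ := by gcongr
      _ ≤ ‖t * P.derivative.eval z‖ := by
        simpa using norm_sub_norm_le x (x + t * P.derivative.eval z)
      _ ≤ ‖t‖ * L := by rw [norm_mul]; gcongr
  have hy' : 0 < ‖y‖ := norm_pos_iff.2 hy
  have hmvt : ‖P.eval (z + y * t) - P.eval z‖ ≤ L * ‖z + y * t - z‖ :=
    (convex_closedBall 0 ρ).norm_image_sub_le_of_norm_deriv_le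
      (fun _ _ => P.differentiableAt)
      (fun u hu => P.deriv ▸ hP' u (mem_closedBall_zero_iff.1 hu))
      (mem_closedBall_zero_iff.2 hz) (mem_closedBall_zero_iff.2 hw)
  have hPw := norm_eval_add_mul_le_of_norm_eta_le hxy heta
  have hPz : ‖P.eval z‖ = ‖x‖ * ‖y‖ := by rw [← hxy, norm_mul]
  rw [add_sub_cancel_left, norm_mul] at hmvt
  have := norm_sub_norm_le (P.eval z) (P.eval (z + y * t))
  rw [norm_sub_rev, hPz] at this
  refine le_of_mul_le_mul_right ?_ hy'
  linarith

theorem exists_sub_pow_le_of_norm_eta_le (hP : 0 < P.natDegree) :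
    ∃ K, 0 ≤ K ∧ ∀ t x y z r, x * y = P.eval z → ‖eta P t x y z‖ ≤ r → r ≤ ‖x‖ →
      (‖x‖ - r) ^ P.natDegree ≤ K * ‖t‖ ^ P.natDegree * max 1 (‖x‖ * ‖y‖) ^ (P.natDegree - 1) := by
  obtain ⟨K, hK, hsublevel⟩ := P.exists_norm_derivative_le_of_norm_eval_le hP
  refine ⟨K, hK, fun t x y z r hxy heta hr => ?_⟩
  obtain ⟨ρ, L, hL, hρ, hP'⟩ := hsublevel (max 1 (‖x‖ * ‖y‖)) (le_max_left _ _)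
  have hz : ‖z‖ ≤ ρ := hρ z <| by rw [← hxy, norm_mul]; exact le_max_right _ _
  have hw : ‖z + y * t‖ ≤ ρ := hρ _ <|
    (norm_eval_add_mul_le_of_norm_eta_le hxy heta).trans <|
      (mul_le_mul_of_nonneg_right hr (norm_nonneg y)).trans (le_max_right _ _)
  have hlin := norm_sub_le_norm_mul_of_norm_eta_le hxy heta hP' hz hw
  calc (‖x‖ - r) ^ P.natDegree ≤ (‖t‖ * L) ^ P.natDegree := by gcongr
    _ = ‖t‖ ^ P.natDegree * L ^ P.natDegree := mul_pow _ _ _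
    _ ≤ ‖t‖ ^ P.natDegree * (K * max 1 (‖x‖ * ‖y‖) ^ (P.natDegree - 1)) := by gcongr
    _ = K * ‖t‖ ^ P.natDegree * max 1 (‖x‖ * ‖y‖) ^ (P.natDegree - 1) := by ring

end Danielewski

theorem eventually_mul_rpow_lt_sub_pow {γ : ℝ} {d : ℕ} (hγ : γ < d) (K r : ℝ) :
    ∀ᶠ R in atTop, K * R ^ γ < (R - r) ^ d := by
  filter_upwards [eventually_gt_atTop 0, eventually_ge_atTop (2 * r),
    (tendsto_rpow_atTop (sub_pos.2 hγ)).eventually_gt_atTop (2 ^ d * K)] with R hR hRr hRγ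
  calc K * R ^ γ = 2 ^ d * K * R ^ γ / 2 ^ d := by field_simp
    _ < R ^ ((d : ℝ) - γ) * R ^ γ / 2 ^ d := by gcongr
    _ = (R / 2) ^ d := by
      rw [← Real.rpow_add hR, sub_add_cancel, Real.rpow_natCast, div_pow]
    _ ≤ (R - r) ^ d := by gcongr; linarith

theorem one_add_one_div_sq_mul_sub_one_lt {d : ℝ} (hd : 1 ≤ d) : (1 + 1 / d ^ 2) * (d - 1) < d := by
  have hd2 : 0 < d ^ 2 := by positivity
  calc (1 + 1 / d ^ 2) * (d - 1) = d - 1 + (d - 1) / d ^ 2 := by ring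
    _ < d - 1 + 1 := by gcongr; rw [div_lt_one hd2]; nlinarith
    _ = d := by ring

theorem stmt4_general (P : Polynomial ℂ) (d : ℕ) (hd : 2 ≤ d) (hdeg : P.natDegree = d) :
    ∀ r : ℝ, 0 < r → ∀ C : ℝ, 0 < C → ∃ R₀ : ℝ, 0 < R₀ ∧
      ∀ R : ℝ, R₀ ≤ R → ∀ t x y z : ℂ,
        x * y = P.eval z → ‖x‖ = R →
        ‖y‖ ≤ R ^ ((1 : ℝ) / (d : ℝ) ^ 2) →
        ‖eta P t x y z‖ ≤ r → C < ‖t‖ := by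
  intro r hr C hC
  subst hdeg
  set d := P.natDegree
  set β : ℝ := 1 / (d : ℝ) ^ 2
  obtain ⟨K, hK, hkey⟩ := exists_sub_pow_le_of_norm_eta_le (P := P) (by omega)
  have hγ : (1 + β) * ((d - 1 : ℕ) : ℝ) < d := by
    rw [Nat.cast_pred (by omega)]
    exact one_add_one_div_sq_mul_sub_one_lt (by exact_mod_cast (by omega : 1 ≤ d))
  obtain ⟨R₀, hR₀⟩ := ((eventually_mul_rpow_lt_sub_pow hγ (K * C ^ d) r).and
    (eventually_ge_atTop (max 1 r))).exists_forall_of_atTop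
  refine ⟨max R₀ 1, by positivity, fun R hR t x y z hxy hx hy heta => ?_⟩
  obtain ⟨hlt, hR1r⟩ := hR₀ R (le_of_max_le_left hR)
  have hR1 : 1 ≤ R := le_of_max_le_left hR1r
  have hxy' : max 1 (‖x‖ * ‖y‖) ≤ R ^ (1 + β) := by
    rw [Real.rpow_add (by linarith), Real.rpow_one, hx]
    refine max_le ?_ (by gcongr)
    exact one_le_mul_of_one_le_of_one_le hR1 (Real.one_le_rpow hR1 (by positivity))
  by_contra! ht
  refine hlt.not_ge ?_
  calc (R - r) ^ d ≤ K * ‖t‖ ^ d * max 1 (‖x‖ * ‖y‖) ^ (d - 1) :=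
        hx ▸ hkey t x y z r hxy heta (hx ▸ le_of_max_le_right hR1r)
    _ ≤ K * C ^ d * (R ^ (1 + β)) ^ (d - 1) := by gcongr
    _ = K * C ^ d * R ^ ((1 + β) * ((d - 1 : ℕ) : ℝ)) := by
      rw [Real.rpow_mul (by linarith), Real.rpow_natCast]

theorem stmt4 (P : Polynomial ℂ) (d : ℕ) (hd : 2 ≤ d) (hdeg : P.natDegree = d)
    (hsq : ∀ z : ℂ, ¬(P.eval z = 0 ∧ (Polynomial.derivative P).eval z = 0)) :
    ∀ r : ℝ, 0 < r → ∀ C : ℝ, 0 < C → ∃ R₀ : ℝ, 0 < R₀ ∧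
      ∀ R : ℝ, R₀ ≤ R → ∀ t x y z : ℂ,
        x * y = P.eval z → ‖x‖ = R →
        ‖y‖ ≤ R ^ ((1 : ℝ) / (d : ℝ) ^ 2) →
        ‖eta P t x y z‖ ≤ r → C < ‖t‖ :=
  stmt4_general P d hd hdeg
end

section
/- Suppose the family (π_t) is spreading, i.e. for all r, δ > 0 there exists R > 0 such that μ({t : ρ_Y(π_t(x)) < r}) < δ whenever ρ_X(x) > R. Then there exists a sequence (R_n)_{n∈ℕ} of positive real numbers with the following property: for every sequence (p_n)_{n∈ℕ} in X satisfying ρ_X(p_{n+1}) ≥ ρ_X(p_n) > R_n for all n, the set of parameters t ∈ P for which there exists some r > 0 with {n ∈ ℕ : ρ_Y(π_t(p_n)) ≤ r} infinite has μ-measure zero; in other words, for μ-almost every t the map π_t restricted to {p_n : n ∈ ℕ} is proper (preimages of compact subsets of Y are finite) and its image is a discrete subset of Y. -/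
open MeasureTheory Filter
open scoped ENNReal

/-! Spreading applied with radius `m + 1` and tolerance `2⁻ⁿ` gives thresholds `g m n`;
taking `R n` above `g m n` for all `m ≤ n` makes `μ {t | ρY (π t (p n)) < m + 1} < 2⁻ⁿ`
for every `n ≥ m`. By Borel–Cantelli, for almost every `t` each sublevel set `{ρY < m + 1}`
then contains `π t (p n)` for only finitely many `n`. -/

theorem exists_pos_bound_on_lower_triangle (g : ℕ → ℕ → ℝ) :
    ∃ R : ℕ → ℝ, (∀ n, 0 < R n) ∧ ∀ m n, m ≤ n → g m n ≤ R n := by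
  choose M hM using fun n => ((Finset.range (n + 1)).image (g · n)).exists_le
  refine ⟨fun n => max (M n) 0 + 1, fun n => by positivity, fun m n hmn => ?_⟩
  have := hM n (g m n) (Finset.mem_image_of_mem _ (Finset.mem_range_succ_iff.2 hmn))
  linarith [le_max_left (M n) 0]

theorem measure_setOf_exists_frequently_eq_zero {Ω : Type*} [MeasurableSpace Ω] {μ : Measure Ω}
    {s : ℕ → ℕ → Set Ω} {ε : ℕ → ℝ≥0∞} (hε : ∑' n, ε n ≠ ∞)
    (hs : ∀ m n, m ≤ n → μ (s m n) ≤ ε n) :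
    μ {t | ∃ m, ∃ᶠ n in atTop, t ∈ s m n} = 0 := by
  rw [Set.ofPred_exists]
  refine measure_iUnion_null fun m => measure_mono_null
    (fun t ht => Frequently.and_eventually ht (eventually_ge_atTop m))
    (measure_setOfPred_frequently_eq_zero (ne_top_of_le_ne_top hε (ENNReal.tsum_le_tsum ?_)))
  intro n
  by_cases hmn : m ≤ n
  · simpa [hmn] using hs m n hmn
  · simp [hmn]

theorem stmt8_general {X Y Ω : Type*}
    [MeasurableSpace Ω] (μ : Measure Ω)
    (ρX : X → ℝ) (ρY : Y → ℝ)
    (π : Ω → X → Y)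
    (hspread : ∀ r : ℝ, 0 < r → ∀ δ : ℝ, 0 < δ → ∃ R : ℝ, 0 < R ∧
        ∀ x : X, R < ρX x → μ {t : Ω | ρY (π t x) < r} < ENNReal.ofReal δ) :
    ∃ R : ℕ → ℝ, (∀ n, 0 < R n) ∧
      ∀ p : ℕ → X,
        (∀ n, ρX (p n) ≤ ρX (p (n + 1)) ∧ R n < ρX (p n)) →
        μ {t : Ω | ∃ r : ℝ, 0 < r ∧ {n : ℕ | ρY (π t (p n)) ≤ r}.Infinite} = 0 := by
  choose g _ hg using fun m n : ℕ =>
    hspread (m + 1) m.cast_add_one_pos ((1 / 2) ^ n) (by positivity)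
  obtain ⟨R, hR0, hgR⟩ := exists_pos_bound_on_lower_triangle g
  have hsum : ∑' n : ℕ, ENNReal.ofReal ((1 / 2) ^ n) ≠ ∞ := by
    rw [← ENNReal.ofReal_tsum_of_nonneg (fun n => by positivity) summable_geometric_two]
    exact ENNReal.ofReal_ne_top
  refine ⟨R, hR0, fun p hp => measure_mono_null ?_ (measure_setOf_exists_frequently_eq_zero
    (s := fun m n => {t | ρY (π t (p n)) < m + 1}) hsum
    fun m n hmn => (hg m n (p n) ((hgR m n hmn).trans_lt (hp n).2)).le)⟩
  rintro t ⟨r, -, hinf⟩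
  exact ⟨⌈r⌉₊, (Nat.frequently_atTop_iff_infinite.2 hinf).mono
    fun n hn => hn.trans_lt ((Nat.le_ceil r).trans_lt (lt_add_one _))⟩

theorem stmt8 {X Y Ω : Type*} [TopologicalSpace X] [TopologicalSpace Y]
    [LocallyCompactSpace X] [LocallyCompactSpace Y] [T2Space X] [T2Space Y]
    [MeasurableSpace Y] [BorelSpace Y]
    [MeasurableSpace Ω] (μ : Measure Ω) [IsProbabilityMeasure μ]
    (ρX : X → ℝ) (ρY : Y → ℝ)
    (hρXc : Continuous ρX) (hρX0 : ∀ x, 0 ≤ ρX x)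
    (hρXe : ∀ c : ℝ, 0 < c → IsCompact {x : X | ρX x ≤ c})
    (hρYc : Continuous ρY) (hρY0 : ∀ y, 0 ≤ ρY y)
    (hρYe : ∀ c : ℝ, 0 < c → IsCompact {y : Y | ρY y ≤ c})
    (π : Ω → X → Y) (hcont : ∀ t, Continuous (π t))
    (hmeas : ∀ x, Measurable fun t => π t x)
    (hspread : ∀ r : ℝ, 0 < r → ∀ δ : ℝ, 0 < δ → ∃ R : ℝ, 0 < R ∧
        ∀ x : X, R < ρX x → μ {t : Ω | ρY (π t x) < r} < ENNReal.ofReal δ) :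
    ∃ R : ℕ → ℝ, (∀ n, 0 < R n) ∧
      ∀ p : ℕ → X,
        (∀ n, ρX (p n) ≤ ρX (p (n + 1)) ∧ R n < ρX (p n)) →
        μ {t : Ω | ∃ r : ℝ, 0 < r ∧ {n : ℕ | ρY (π t (p n)) ≤ r}.Infinite} = 0 :=
  stmt8_general μ ρX ρY π hspread
end

section
/- Let X, Y₁, Y₂ be topological spaces, let ρ₁ be an exhaustion function on Y₁ and ρ₂ an exhaustion function on Y₂, let π = (π₁, π₂) : X → Y₁ × Y₂ be a proper continuous map (preimages of compact sets are compact), and let D ⊆ X be a subset whose intersection with every compact subset of X is finite. Then there exist subsets D₁, D₂ ⊆ D with D = D₁ ∪ D₂ such that for each i ∈ {1,2} and every R > 0 the set {x ∈ D_i : ρ_i(π_i(x)) ≤ R} is finite; in particular π_i restricts to a proper map from D_i onto a discrete subset of Y_i. -/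
theorem stmt9 {X Y₁ Y₂ : Type*} [TopologicalSpace X]
    [TopologicalSpace Y₁] [TopologicalSpace Y₂]
    (ρ₁ : Y₁ → ℝ) (ρ₂ : Y₂ → ℝ)
    (hρ₁c : Continuous ρ₁) (hρ₁0 : ∀ y, 0 ≤ ρ₁ y)
    (hρ₁e : ∀ c : ℝ, 0 < c → IsCompact {y : Y₁ | ρ₁ y ≤ c})
    (hρ₂c : Continuous ρ₂) (hρ₂0 : ∀ y, 0 ≤ ρ₂ y)
    (hρ₂e : ∀ c : ℝ, 0 < c → IsCompact {y : Y₂ | ρ₂ y ≤ c})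
    (π₁ : X → Y₁) (π₂ : X → Y₂)
    (hπc : Continuous fun x => (π₁ x, π₂ x))
    (hπproper : ∀ K : Set (Y₁ × Y₂), IsCompact K →
        IsCompact ((fun x => (π₁ x, π₂ x)) ⁻¹' K))
    (D : Set X) (hD : ∀ K : Set X, IsCompact K → (D ∩ K).Finite) :
    ∃ D₁ D₂ : Set X, D₁ ⊆ D ∧ D₂ ⊆ D ∧ D = D₁ ∪ D₂ ∧
      (∀ R : ℝ, 0 < R → {x ∈ D₁ | ρ₁ (π₁ x) ≤ R}.Finite) ∧
      (∀ R : ℝ, 0 < R → {x ∈ D₂ | ρ₂ (π₂ x) ≤ R}.Finite) := by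
  refine ⟨{x ∈ D | ρ₂ (π₂ x) ≤ ρ₁ (π₁ x)}, {x ∈ D | ρ₁ (π₁ x) ≤ ρ₂ (π₂ x)},
    fun x hx => hx.1, fun x hx => hx.1, ?_, ?_, ?_⟩
  · ext x
    simp only [Set.mem_union, Set.mem_setOf_eq]
    constructor
    · intro hx
      rcases le_total (ρ₂ (π₂ x)) (ρ₁ (π₁ x)) with h | h
      · exact Or.inl ⟨hx, h⟩
      · exact Or.inr ⟨hx, h⟩
    · rintro (⟨h, _⟩ | ⟨h, _⟩) <;> exact h
  · intro R hR
    have hK : IsCompact ({y : Y₁ | ρ₁ y ≤ R} ×ˢ {y : Y₂ | ρ₂ y ≤ R}) :=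
      (hρ₁e R hR).prod (hρ₂e R hR)
    have := hD _ (hπproper _ hK)
    refine this.subset fun x hx => ?_
    obtain ⟨⟨hxD, hle⟩, hR1⟩ := hx
    exact ⟨hxD, ⟨hR1, hle.trans hR1⟩⟩
  · intro R hR
    have hK : IsCompact ({y : Y₁ | ρ₁ y ≤ R} ×ˢ {y : Y₂ | ρ₂ y ≤ R}) :=
      (hρ₁e R hR).prod (hρ₂e R hR)
    have := hD _ (hπproper _ hK)
    refine this.subset fun x hx => ?_
    obtain ⟨⟨hxD, hle⟩, hR2⟩ := hx
    exact ⟨hxD, ⟨hle.trans hR2, hR2⟩⟩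
end

section
/- Let P be a non-constant polynomial, X = {(x,y,z) ∈ ℂ³ : x·y = P(z)} the associated Danielewski surface, and D ⊆ X a subset whose intersection with every compact subset of ℂ³ is finite. Then there exist subsets D₁, D₂ with D = D₁ ∪ D₂ such that for every R > 0 both sets {(x,y,z) ∈ D₁ : |x| ≤ R} and {(x,y,z) ∈ D₂ : |y| ≤ R} are finite; i.e. the coordinate projection (x,y,z) ↦ x is proper on D₁ and the projection (x,y,z) ↦ y is proper on D₂. -/
open Polynomial

variable {𝕜 : Type*} [NontriviallyNormedField 𝕜] [ProperSpace 𝕜]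

/- On `x * y = P z`, bounding `x` and `y` bounds `P z`, hence `z`, because a nonconstant
polynomial map is proper. -/
lemma Polynomial.finite_sep_norm_le_of_mul_eq_eval (P : 𝕜[X]) (hP : 0 < P.degree)
    {D : Set (𝕜 × 𝕜 × 𝕜)} (hDX : ∀ p ∈ D, p.1 * p.2.1 = P.eval p.2.2)
    (hD : ∀ K : Set (𝕜 × 𝕜 × 𝕜), IsCompact K → (D ∩ K).Finite) (R : ℝ) :
    {p ∈ D | ‖p.1‖ ≤ R ∧ ‖p.2.1‖ ≤ R}.Finite := by
  have hK : IsCompact (Metric.closedBall (0 : 𝕜) R ×ˢ Metric.closedBall (0 : 𝕜) R ×ˢ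
      (P.eval ⁻¹' Metric.closedBall 0 (R * R))) :=
    (isCompact_closedBall _ _).prod <| (isCompact_closedBall _ _).prod <|
      (P.isProperMap_eval hP).isCompact_preimage (isCompact_closedBall _ _)
  refine (hD _ hK).subset ?_
  rintro p ⟨hpD, hx, hy⟩
  have hPz : ‖P.eval p.2.2‖ ≤ R * R := by
    rw [← hDX p hpD, norm_mul]
    exact mul_le_mul hx hy (norm_nonneg _) ((norm_nonneg _).trans hx)
  exact ⟨hpD, by simpa [Metric.mem_closedBall, dist_eq_norm] using ⟨hx, hy, hPz⟩⟩

theorem stmt10 (P : Polynomial ℂ) (hP : 0 < P.natDegree)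
    (D : Set (ℂ × ℂ × ℂ))
    (hDX : ∀ p ∈ D, p.1 * p.2.1 = P.eval p.2.2)
    (hD : ∀ K : Set (ℂ × ℂ × ℂ), IsCompact K → (D ∩ K).Finite) :
    ∃ D₁ D₂ : Set (ℂ × ℂ × ℂ), D₁ ⊆ D ∧ D₂ ⊆ D ∧ D = D₁ ∪ D₂ ∧
      (∀ R : ℝ, 0 < R → {p ∈ D₁ | ‖p.1‖ ≤ R}.Finite) ∧
      (∀ R : ℝ, 0 < R → {p ∈ D₂ | ‖p.2.1‖ ≤ R}.Finite) := by
  have hfin := P.finite_sep_norm_le_of_mul_eq_eval (natDegree_pos_iff_degree_pos.mp hP) hDX hD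
  refine ⟨{p ∈ D | ‖p.2.1‖ ≤ ‖p.1‖}, {p ∈ D | ‖p.1‖ ≤ ‖p.2.1‖},
    Set.sep_subset _ _, Set.sep_subset _ _, ?_, ?_, ?_⟩
  · ext p
    simp only [Set.mem_union, Set.mem_ofPred_eq, ← and_or_left, le_total, and_true]
  · rintro R -
    exact (hfin R).subset fun p ⟨⟨hpD, hyx⟩, hx⟩ => ⟨hpD, hx, hyx.trans hx⟩
  · rintro R -
    exact (hfin R).subset fun p ⟨⟨hpD, hxy⟩, hy⟩ => ⟨hpD, hxy.trans hy, hy⟩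
end

section
/- Let P be a polynomial of degree d ≥ 1. For t ∈ ℂ define F_t : ℂ³ → ℂ³ by F_t(x,y,z) = ( x + Σ_{k=1}^{d} (−1)^k y^{k−1} t^k P^{(k)}(z)/k!, y, z − yt ), where P^{(k)} is the k-th derivative of P. Then: (1) F_0 is the identity and F_s ∘ F_t = F_{s+t} for all s, t ∈ ℂ, so t ↦ F_t is an action of the additive group (ℂ,+) on ℂ³ by bijections preserving the y-coordinate; (2) F_t maps X = {(x,y,z) ∈ ℂ³ : x·y = P(z)} into itself for every t ∈ ℂ; (3) for every (x,y,z) ∈ X with y ≠ 0, the first coordinate of F_t(x,y,z) equals (1/y)·P(z − yt). -/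
/-!
By Taylor's formula the increment `S` of the first coordinate satisfies
`y * S(y, t, z) = P(z - y t) - P(z)`. Hence `x y - P(z)` is invariant, on `X` with `y ≠ 0` the
first coordinate becomes `P(z - y t) / y`, and the group law telescopes for `y ≠ 0`; since `S`
is polynomial in `y`, it extends to `y = 0` by continuity.
-/

open Polynomial

/-- F_t(x,y,z) = ( x + Σ_{k=1}^{d} (−1)^k y^{k−1} t^k P^{(k)}(z)/k!, y, z − yt ),
    where d = deg P and P^{(k)} is the k-th derivative of P. -/
noncomputable def Fflow (P : Polynomial ℂ) (t : ℂ) (p : ℂ × ℂ × ℂ) : ℂ × ℂ × ℂ :=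
  (p.1 + ∑ k ∈ Finset.Icc 1 P.natDegree,
      (-1) ^ k * p.2.1 ^ (k - 1) * t ^ k *
        ((fun q => Polynomial.derivative q)^[k] P).eval p.2.2 / (Nat.factorial k : ℂ),
   p.2.1, p.2.2 - p.2.1 * t)

open Nat

section Taylor

variable {R : Type*} [CommSemiring R]

theorem Polynomial.eval_iterate_derivative_eq_factorial_mul_hasseDeriv (P : R[X]) (k : ℕ)
    (z : R) : (derivative^[k] P).eval z = k ! * (hasseDeriv k P).eval z := by
  rw [← factorial_smul_hasseDeriv]
  simp [nsmul_eq_mul]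

theorem Polynomial.eval_add_eq_sum_hasseDeriv (P : R[X]) (z w : R) :
    P.eval (z + w) = ∑ k ∈ Finset.range (P.natDegree + 1), (hasseDeriv k P).eval z * w ^ k := by
  rw [add_comm, ← taylor_eval, eval_eq_sum_range' (n := P.natDegree + 1)
    (by rw [natDegree_taylor]; omega)]
  simp only [taylor_coeff]

end Taylor

noncomputable def flowShift (P : ℂ[X]) (y t z : ℂ) : ℂ :=
  ∑ k ∈ Finset.Icc 1 P.natDegree,
    (-1) ^ k * y ^ (k - 1) * t ^ k *
      ((fun q => derivative q)^[k] P).eval z / (k ! : ℂ)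

theorem Fflow_apply (P : ℂ[X]) (t : ℂ) (p : ℂ × ℂ × ℂ) :
    Fflow P t p = (p.1 + flowShift P p.2.1 t p.2.2, p.2.1, p.2.2 - p.2.1 * t) :=
  rfl

theorem flowShift_zero (P : ℂ[X]) (y z : ℂ) : flowShift P y 0 z = 0 :=
  Finset.sum_eq_zero fun k hk => by
    simp [zero_pow (show k ≠ 0 by grind)]

theorem mul_flowShift (P : ℂ[X]) (y t z : ℂ) :
    y * flowShift P y t z = P.eval (z - y * t) - P.eval z := by
  have hterm : ∀ k ∈ Finset.Icc 1 P.natDegree,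
      y * ((-1) ^ k * y ^ (k - 1) * t ^ k *
        ((fun q => derivative q)^[k] P).eval z / (k ! : ℂ))
      = (hasseDeriv k P).eval z * (-(y * t)) ^ k := by
    intro k hk
    obtain ⟨j, rfl⟩ := Nat.exists_eq_add_of_le' (Finset.mem_Icc.mp hk).1
    have hfac : ((j + 1)! : ℂ) ≠ 0 := Nat.cast_ne_zero.mpr (factorial_ne_zero _)
    rw [eval_iterate_derivative_eq_factorial_mul_hasseDeriv, Nat.add_sub_cancel]
    field_simp
    ring
  rw [flowShift, Finset.mul_sum, Finset.sum_congr rfl hterm, sub_eq_add_neg z,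
    eval_add_eq_sum_hasseDeriv, Finset.range_eq_Ico, Finset.sum_eq_sum_Ico_succ_bot (by omega),
    Finset.Ico_add_one_right_eq_Icc]
  simp

@[fun_prop]
theorem continuous_flowShift (P : ℂ[X]) (t : ℂ) {f : ℂ → ℂ} (hf : Continuous f) :
    Continuous fun y => flowShift P y t (f y) := by
  unfold flowShift
  fun_prop

theorem flowShift_add (P : ℂ[X]) (y s t z : ℂ) :
    flowShift P y t z + flowShift P y s (z - y * t) = flowShift P y (s + t) z := by
  have hcont_left : Continuous fun y => flowShift P y t z + flowShift P y s (z - y * t) := by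
    fun_prop
  have hcont_right : Continuous fun y => flowShift P y (s + t) z := by fun_prop
  refine congrFun (hcont_left.ext_on (dense_compl_singleton 0) hcont_right fun y hy => ?_) y
  refine mul_left_cancel₀ (show y ≠ 0 from hy) ?_
  simp only [mul_add, mul_flowShift]
  ring_nf

theorem Fflow_zero (P : ℂ[X]) (p : ℂ × ℂ × ℂ) : Fflow P 0 p = p := by
  simp [Fflow_apply, flowShift_zero]

theorem Fflow_Fflow (P : ℂ[X]) (s t : ℂ) (p : ℂ × ℂ × ℂ) :
    Fflow P s (Fflow P t p) = Fflow P (s + t) p := by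
  simp only [Fflow_apply, add_assoc, flowShift_add]
  ring_nf

theorem Fflow_bijective (P : ℂ[X]) (t : ℂ) : Function.Bijective (Fflow P t) :=
  Function.bijective_iff_has_inverse.mpr ⟨Fflow P (-t),
    fun p => by rw [Fflow_Fflow, neg_add_cancel, Fflow_zero],
    fun p => by rw [Fflow_Fflow, add_neg_cancel, Fflow_zero]⟩

theorem Fflow_fst_mul_snd (P : ℂ[X]) (t : ℂ) (p : ℂ × ℂ × ℂ) :
    (Fflow P t p).1 * p.2.1 = p.1 * p.2.1 + P.eval (p.2.2 - p.2.1 * t) - P.eval p.2.2 := by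
  rw [Fflow_apply, add_mul, mul_comm (flowShift _ _ _ _), mul_flowShift]
  ring

theorem stmt13_general (P : Polynomial ℂ) :
    (∀ p : ℂ × ℂ × ℂ, Fflow P 0 p = p) ∧
    (∀ s t : ℂ, ∀ p : ℂ × ℂ × ℂ, Fflow P s (Fflow P t p) = Fflow P (s + t) p) ∧
    (∀ t : ℂ, Function.Bijective (Fflow P t)) ∧
    (∀ t : ℂ, ∀ p : ℂ × ℂ × ℂ, (Fflow P t p).2.1 = p.2.1) ∧
    (∀ t : ℂ, ∀ p : ℂ × ℂ × ℂ, p.1 * p.2.1 = P.eval p.2.2 →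
      (Fflow P t p).1 * (Fflow P t p).2.1 = P.eval (Fflow P t p).2.2) ∧
    (∀ t : ℂ, ∀ p : ℂ × ℂ × ℂ, p.1 * p.2.1 = P.eval p.2.2 → p.2.1 ≠ 0 →
      (Fflow P t p).1 = p.2.1⁻¹ * P.eval (p.2.2 - p.2.1 * t)) := by
  refine ⟨Fflow_zero P, Fflow_Fflow P, Fflow_bijective P, fun _ _ => rfl,
    fun t p hp => ?_, fun t p hp hy => ?_⟩
  · change _ * p.2.1 = P.eval (p.2.2 - p.2.1 * t)
    rw [Fflow_fst_mul_snd, hp]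
    ring
  · rw [eq_inv_mul_iff_mul_eq₀ hy, mul_comm, Fflow_fst_mul_snd, hp]
    ring

theorem stmt13 (P : Polynomial ℂ) (hdeg : 1 ≤ P.natDegree) :
    (∀ p : ℂ × ℂ × ℂ, Fflow P 0 p = p) ∧
    (∀ s t : ℂ, ∀ p : ℂ × ℂ × ℂ, Fflow P s (Fflow P t p) = Fflow P (s + t) p) ∧
    (∀ t : ℂ, Function.Bijective (Fflow P t)) ∧
    (∀ t : ℂ, ∀ p : ℂ × ℂ × ℂ, (Fflow P t p).2.1 = p.2.1) ∧
    (∀ t : ℂ, ∀ p : ℂ × ℂ × ℂ, p.1 * p.2.1 = P.eval p.2.2 →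
      (Fflow P t p).1 * (Fflow P t p).2.1 = P.eval (Fflow P t p).2.2) ∧
    (∀ t : ℂ, ∀ p : ℂ × ℂ × ℂ, p.1 * p.2.1 = P.eval p.2.2 → p.2.1 ≠ 0 →
      (Fflow P t p).1 = p.2.1⁻¹ * P.eval (p.2.2 - p.2.1 * t)) :=
  stmt13_general P
end
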